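/- arXiv:math/9412229 — 3 statements merged into one kernel-verified Lean document; each statement's English description precedes it below -/
import Mathlib

section
/- Let λ be an infinite cardinal, L a first-order language with |L| ≤ λ, and T a complete L-theory. Let N be a model of T of cardinality ≥ λ such that every model of T of cardinality λ elementarily embeds into N. Let F be a family of subsets of the universe of N, each of cardinality ≤ λ, such that every subset of the universe of N of cardinality ≤ λ is contained in some member of F. Then there is a family of at most |F| models of T, each of cardinality λ, such that every model of T of cardinality λ elementarily embeds into some member of the family. -/
open FirstOrder Language Cardinal

/-- Codomain restriction of an elementary embedding to an elementary substructure
containing its range. -/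
noncomputable def myCodRestrict {L : FirstOrder.Language.{0,0}} {M N : Type}
    [L.Structure M] [L.Structure N] (f : M ↪ₑ[L] N)
    (S : L.ElementarySubstructure N) (h : ∀ x, f x ∈ S) : M ↪ₑ[L] S where
  toFun := fun x => ⟨f x, h x⟩
  map_formula' := fun {n} φ x => by
    have := S.isElementary φ (fun i => ⟨f (x i), h (x i)⟩)
    rw [show ((fun y => (⟨f y, h y⟩ : S)) ∘ x) = (fun i => (⟨f (x i), h (x i)⟩ : S)) from rfl,
      ← this]
    exact f.map_formula φ x

/-- If `N` is a model of a complete theory `T` (language of size `≤ λ`, λ infinite)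
of cardinality `≥ λ` into which every model of `T` of cardinality `λ` elementarily embeds, and
`F` is a family of subsets of `N`, each of size `≤ λ`, cofinal among subsets of size `≤ λ`,
then there is a family of at most `|F|` models of `T` of cardinality `λ` such that every model
of `T` of cardinality `λ` elementarily embeds into some member. -/
theorem statement1 (L : FirstOrder.Language.{0, 0}) (T : L.Theory) (hT : T.IsComplete)
    (lam : Cardinal.{0}) (hlam : Cardinal.aleph0 ≤ lam) (hL : L.card ≤ lam)
    (N : Theory.ModelType.{0,0,0} T) (hNcard : lam ≤ #N.Carrier)
    (hNuniv : ∀ M : Theory.ModelType.{0,0,0} T, #M.Carrier = lam →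
      Nonempty (M.Carrier ↪ₑ[L] N.Carrier))
    (F : Set (Set N.Carrier))
    (hFsmall : ∀ s ∈ F, #s ≤ lam)
    (hFcofinal : ∀ s : Set N.Carrier, #s ≤ lam → ∃ t ∈ F, s ⊆ t) :
    ∃ (ι : Type) (M : ι → Theory.ModelType.{0,0,0} T),
      #ι ≤ #F ∧ (∀ i, #(M i).Carrier = lam) ∧
      ∀ M' : Theory.ModelType.{0,0,0} T, #M'.Carrier = lam →
        ∃ i, Nonempty (M'.Carrier ↪ₑ[L] (M i).Carrier) := by
  -- for each member of F choose an elementary substructure of size lam containing it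
  have key : ∀ s : F, ∃ S : L.ElementarySubstructure N.Carrier,
      (s : Set N.Carrier) ⊆ S ∧ #S = lam := by
    rintro ⟨s, hs⟩
    obtain ⟨S, hsS, hScard⟩ := exists_elementarySubstructure_card_eq L s lam hlam
      (by simpa using hFsmall s hs) (by simpa using hL) (by simpa using hNcard)
    exact ⟨S, hsS, by simpa using hScard⟩
  choose S hS hScard using key
  refine ⟨F, fun i => (S i).toModel T, le_refl _, fun i => hScard i, ?_⟩
  intro M' hM'
  obtain ⟨f⟩ := hNuniv M' hM'
  obtain ⟨t, htF, htsub⟩ := hFcofinal (Set.range f) (by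
    rw [Cardinal.mk_range_eq _ f.injective, hM'])
  refine ⟨⟨t, htF⟩, ⟨myCodRestrict f (S ⟨t, htF⟩) (fun x => ?_)⟩⟩
  exact hS ⟨t, htF⟩ (htsub (Set.mem_range_self x))
end

section
/- Let λ be a regular uncountable cardinal. Let M₀, M₁, M₂ be feq-structures whose universes are subsets of λ⁺ of cardinality < λ, with |M₁| ∩ |M₂| = |M₀|, M₀ ≤ M₁ and M₀ ≤ M₂. Define M₃ by: |M₃| = |M₁| ∪ |M₂|, P^{M₃} = P^{M₁} ∪ P^{M₂}, Q^{M₃} = Q^{M₁} ∪ Q^{M₂}, and for each x ∈ P^{M₃}, E^{M₃}_x is the smallest equivalence relation on Q^{M₃} containing E^{M₁}_x (if x ∈ P^{M₁}) and E^{M₂}_x (if x ∈ P^{M₂}). Then M₃ is a feq-structure, M₁ ≤ M₃ and M₂ ≤ M₃. -/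
open Cardinal Set

/-- A feq-structure whose universe is a set of ordinals. -/
structure OrdFeq : Type 1 where
  U : Set Ordinal.{0}
  P : Set Ordinal.{0}
  Q : Set Ordinal.{0}
  E : Ordinal.{0} → Ordinal.{0} → Ordinal.{0} → Prop
  P_sub : P ⊆ U
  Q_sub : Q ⊆ U
  cover : U ⊆ P ∪ Q
  disj : Disjoint P Q
  E_mem : ∀ x y z, E x y z → x ∈ P ∧ y ∈ Q ∧ z ∈ Q
  refl : ∀ x ∈ P, ∀ y ∈ Q, E x y y
  symm : ∀ x y z, E x y z → E x z y
  trans : ∀ x y z w, E x y z → E x z w → E x y w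

/-- The order `M ≤ N` on feq-structures with universes of ordinals below `λ⁺`:
`M` is a substructure of `N`, and classes of `E^M_a` avoiding `δ` (for `δ < λ⁺` of
cofinality `λ`, `a ∈ P^M ∩ δ`, `b ∈ Q^M ∖ δ`) keep avoiding `δ` in `N`. -/
def FeqLE (lam : Cardinal.{0}) (M N : OrdFeq) : Prop :=
  (M.U ⊆ N.U ∧ M.P = N.P ∩ M.U ∧ M.Q = N.Q ∩ M.U ∧
    ∀ x ∈ M.P, ∀ y z, (M.E x y z ↔ N.E x y z ∧ y ∈ M.Q ∧ z ∈ M.Q)) ∧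
  ∀ δ : Ordinal.{0}, δ < (Order.succ lam).ord → δ.cof = lam →
    ∀ a ∈ M.P, a < δ → ∀ b ∈ M.Q, ¬ b < δ →
      (∀ c ∈ M.Q, M.E a b c → ¬ c < δ) →
      ∀ c ∈ N.Q, N.E a b c → ¬ c < δ

/-- amalgamation for feq-structures, from the proof of Lemma 5.2. -/
theorem statement12 (lam : Cardinal.{0}) (hreg : lam.IsRegular)
    (hunc : Cardinal.aleph0 < lam)
    (M₀ M₁ M₂ : OrdFeq)
    (hsub₀ : M₀.U ⊆ Set.Iio (Order.succ lam).ord) (hcard₀ : #M₀.U < Cardinal.lift.{1} lam)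
    (hsub₁ : M₁.U ⊆ Set.Iio (Order.succ lam).ord) (hcard₁ : #M₁.U < Cardinal.lift.{1} lam)
    (hsub₂ : M₂.U ⊆ Set.Iio (Order.succ lam).ord) (hcard₂ : #M₂.U < Cardinal.lift.{1} lam)
    (hinter : M₁.U ∩ M₂.U = M₀.U)
    (h01 : FeqLE lam M₀ M₁) (h02 : FeqLE lam M₀ M₂) :
    ∃ M₃ : OrdFeq,
      M₃.U = M₁.U ∪ M₂.U ∧ M₃.P = M₁.P ∪ M₂.P ∧ M₃.Q = M₁.Q ∪ M₂.Q ∧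
      -- `E^{M₃}_x` contains `E^{M₁}_x` and `E^{M₂}_x` ...
      (∀ x y z, M₁.E x y z → M₃.E x y z) ∧
      (∀ x y z, M₂.E x y z → M₃.E x y z) ∧
      -- ... and is the smallest equivalence relation on `Q^{M₃}` doing so
      (∀ x ∈ M₃.P, ∀ R : Ordinal.{0} → Ordinal.{0} → Prop,
        (∀ y ∈ M₃.Q, R y y) → (∀ y z, R y z → R z y) →
        (∀ y z w, R y z → R z w → R y w) →
        (∀ y z, M₁.E x y z → R y z) → (∀ y z, M₂.E x y z → R y z) →
        ∀ y z, M₃.E x y z → R y z) ∧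
      FeqLE lam M₁ M₃ ∧ FeqLE lam M₂ M₃ := by
  obtain ⟨⟨hU01, hP01, hQ01, hE01⟩, hcl01⟩ := h01
  obtain ⟨⟨hU02, hP02, hQ02, hE02⟩, hcl02⟩ := h02
  have memU0 : ∀ x, x ∈ M₁.U → x ∈ M₂.U → x ∈ M₀.U := by
    intro x h1 h2; rw [← hinter]; exact ⟨h1, h2⟩
  have memP0 : ∀ x, x ∈ M₁.P → x ∈ M₂.P → x ∈ M₀.P := by
    intro x h1 h2; rw [hP01]; exact ⟨h1, memU0 x (M₁.P_sub h1) (M₂.P_sub h2)⟩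
  have memQ0 : ∀ x, x ∈ M₁.Q → x ∈ M₂.Q → x ∈ M₀.Q := by
    intro x h1 h2; rw [hQ01]; exact ⟨h1, memU0 x (M₁.Q_sub h1) (M₂.Q_sub h2)⟩
  have hP0sub1 : M₀.P ⊆ M₁.P := fun x hx => by rw [hP01] at hx; exact hx.1
  have hQ0sub1 : M₀.Q ⊆ M₁.Q := fun x hx => by rw [hQ01] at hx; exact hx.1
  have hP0sub2 : M₀.P ⊆ M₂.P := fun x hx => by rw [hP02] at hx; exact hx.1
  have hQ0sub2 : M₀.Q ⊆ M₂.Q := fun x hx => by rw [hQ02] at hx; exact hx.1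
  -- conversion lemmas
  have conv21 : ∀ x y z, x ∈ M₁.P → y ∈ M₁.Q → z ∈ M₁.Q → M₂.E x y z → M₁.E x y z := by
    intro x y z hxP hyQ hzQ h
    obtain ⟨hxP2, hyQ2, hzQ2⟩ := M₂.E_mem x y z h
    have hx0 := memP0 x hxP hxP2
    have h0 := (hE02 x hx0 y z).mpr ⟨h, memQ0 y hyQ hyQ2, memQ0 z hzQ hzQ2⟩
    exact ((hE01 x hx0 y z).mp h0).1
  have conv12 : ∀ x y z, x ∈ M₂.P → y ∈ M₂.Q → z ∈ M₂.Q → M₁.E x y z → M₂.E x y z := by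
    intro x y z hxP hyQ hzQ h
    obtain ⟨hxP1, hyQ1, hzQ1⟩ := M₁.E_mem x y z h
    have hx0 := memP0 x hxP1 hxP
    have h0 := (hE01 x hx0 y z).mpr ⟨h, memQ0 y hyQ1 hyQ, memQ0 z hzQ1 hzQ⟩
    exact ((hE02 x hx0 y z).mp h0).1
  set R : Ordinal.{0} → Ordinal.{0} → Ordinal.{0} → Prop :=
    fun x y z => M₁.E x y z ∨ M₂.E x y z ∨ (∃ c, M₁.E x y c ∧ M₂.E x c z) ∨
      (∃ c, M₂.E x y c ∧ M₁.E x c z) with hR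
  have Rsymm : ∀ x y z, R x y z → R x z y := by
    intro x y z h
    rcases h with h | h | ⟨c, h1, h2⟩ | ⟨c, h1, h2⟩
    · exact Or.inl (M₁.symm x y z h)
    · exact Or.inr (Or.inl (M₂.symm x y z h))
    · exact Or.inr (Or.inr (Or.inr ⟨c, M₂.symm x c z h2, M₁.symm x y c h1⟩))
    · exact Or.inr (Or.inr (Or.inl ⟨c, M₁.symm x c z h2, M₂.symm x y c h1⟩))
  have Rtrans : ∀ x y z w, R x y z → R x z w → R x y w := by
    intro x y z w h1 h2
    rcases h1 with hA | hB | ⟨c, hc1, hc2⟩ | ⟨c, hc1, hc2⟩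
    · rcases h2 with hA' | hB' | ⟨d, hd1, hd2⟩ | ⟨d, hd1, hd2⟩
      · exact Or.inl (M₁.trans x y z w hA hA')
      · exact Or.inr (Or.inr (Or.inl ⟨z, hA, hB'⟩))
      · exact Or.inr (Or.inr (Or.inl ⟨d, M₁.trans x y z d hA hd1, hd2⟩))
      · have h := conv21 x z d (M₁.E_mem x y z hA).1 (M₁.E_mem x y z hA).2.2
          (M₁.E_mem x d w hd2).2.1 hd1
        exact Or.inl (M₁.trans x y d w (M₁.trans x y z d hA h) hd2)
    · rcases h2 with hA' | hB' | ⟨d, hd1, hd2⟩ | ⟨d, hd1, hd2⟩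
      · exact Or.inr (Or.inr (Or.inr ⟨z, hB, hA'⟩))
      · exact Or.inr (Or.inl (M₂.trans x y z w hB hB'))
      · have h := conv12 x z d (M₂.E_mem x y z hB).1 (M₂.E_mem x y z hB).2.2
          (M₂.E_mem x d w hd2).2.1 hd1
        exact Or.inr (Or.inl (M₂.trans x y d w (M₂.trans x y z d hB h) hd2))
      · exact Or.inr (Or.inr (Or.inr ⟨d, M₂.trans x y z d hB hd1, hd2⟩))
    · rcases h2 with hA' | hB' | ⟨d, hd1, hd2⟩ | ⟨d, hd1, hd2⟩
      · have h := conv21 x c z (M₁.E_mem x y c hc1).1 (M₁.E_mem x y c hc1).2.2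
          (M₁.E_mem x z w hA').2.1 hc2
        exact Or.inl (M₁.trans x y z w (M₁.trans x y c z hc1 h) hA')
      · exact Or.inr (Or.inr (Or.inl ⟨c, hc1, M₂.trans x c z w hc2 hB'⟩))
      · have h := conv12 x z d (M₂.E_mem x c z hc2).1 (M₂.E_mem x c z hc2).2.2
          (M₂.E_mem x d w hd2).2.1 hd1
        exact Or.inr (Or.inr (Or.inl ⟨c, hc1, M₂.trans x c d w (M₂.trans x c z d hc2 h) hd2⟩))
      · have hcd2 := M₂.trans x c z d hc2 hd1
        have h := conv21 x c d (M₁.E_mem x y c hc1).1 (M₁.E_mem x y c hc1).2.2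
          (M₁.E_mem x d w hd2).2.1 hcd2
        exact Or.inl (M₁.trans x y d w (M₁.trans x y c d hc1 h) hd2)
    · rcases h2 with hA' | hB' | ⟨d, hd1, hd2⟩ | ⟨d, hd1, hd2⟩
      · exact Or.inr (Or.inr (Or.inr ⟨c, hc1, M₁.trans x c z w hc2 hA'⟩))
      · have h := conv12 x c z (M₂.E_mem x y c hc1).1 (M₂.E_mem x y c hc1).2.2
          (M₂.E_mem x z w hB').2.1 hc2
        exact Or.inr (Or.inl (M₂.trans x y z w (M₂.trans x y c z hc1 h) hB'))
      · have hcd1 := M₁.trans x c z d hc2 hd1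
        have h := conv12 x c d (M₂.E_mem x y c hc1).1 (M₂.E_mem x y c hc1).2.2
          (M₂.E_mem x d w hd2).2.1 hcd1
        exact Or.inr (Or.inl (M₂.trans x y d w (M₂.trans x y c d hc1 h) hd2))
      · have h := conv21 x z d (M₁.E_mem x c z hc2).1 (M₁.E_mem x c z hc2).2.2
          (M₁.E_mem x d w hd2).2.1 hd1
        exact Or.inr (Or.inr (Or.inr ⟨c, hc1, M₁.trans x c d w (M₁.trans x c z d hc2 h) hd2⟩))
  -- the amalgam
  refine ⟨{ U := M₁.U ∪ M₂.U, P := M₁.P ∪ M₂.P, Q := M₁.Q ∪ M₂.Q,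
            E := fun x y z => x ∈ M₁.P ∪ M₂.P ∧ y ∈ M₁.Q ∪ M₂.Q ∧ z ∈ M₁.Q ∪ M₂.Q ∧
              (y = z ∨ R x y z),
            P_sub := union_subset_union M₁.P_sub M₂.P_sub,
            Q_sub := union_subset_union M₁.Q_sub M₂.Q_sub,
            cover := ?_, disj := ?_, E_mem := ?_, refl := ?_, symm := ?_, trans := ?_ },
    rfl, rfl, rfl, ?_, ?_, ?_, ?_, ?_⟩
  · rintro x (hx | hx)
    · rcases M₁.cover hx with h | h
      · exact Or.inl (Or.inl h)
      · exact Or.inr (Or.inl h)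
    · rcases M₂.cover hx with h | h
      · exact Or.inl (Or.inr h)
      · exact Or.inr (Or.inr h)
  · rw [Set.disjoint_left]
    rintro x (hx | hx) (hy | hy)
    · exact (Set.disjoint_left.mp M₁.disj) hx hy
    · exact (Set.disjoint_left.mp M₀.disj) (memP0 x hx (hP0sub2 (by
        rw [hP01]; exact ⟨hx, memU0 x (M₁.P_sub hx) (M₂.Q_sub hy)⟩)))
        (memQ0 x (hQ0sub1 (by rw [hQ02]; exact ⟨hy, memU0 x (M₁.P_sub hx) (M₂.Q_sub hy)⟩)) hy)
    · exact (Set.disjoint_left.mp M₀.disj)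
        (by rw [hP02]; exact ⟨hx, memU0 x (M₁.Q_sub hy) (M₂.P_sub hx)⟩)
        (by rw [hQ01]; exact ⟨hy, memU0 x (M₁.Q_sub hy) (M₂.P_sub hx)⟩)
    · exact (Set.disjoint_left.mp M₂.disj) hx hy
  · exact fun x y z h => ⟨h.1, h.2.1, h.2.2.1⟩
  · exact fun x hx y hy => ⟨hx, hy, hy, Or.inl rfl⟩
  · rintro x y z ⟨hx, hy, hz, h | h⟩
    · exact ⟨hx, hz, hy, Or.inl h.symm⟩
    · exact ⟨hx, hz, hy, Or.inr (Rsymm x y z h)⟩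
  · rintro x y z w ⟨hx, hy, hz, h1⟩ ⟨-, -, hw, h2⟩
    refine ⟨hx, hy, hw, ?_⟩
    rcases h1 with rfl | h1
    · exact h2
    · rcases h2 with rfl | h2
      · exact Or.inr h1
      · exact Or.inr (Rtrans x y z w h1 h2)
  -- E₁ ⊆ E₃
  · intro x y z h
    obtain ⟨hxP, hyQ, hzQ⟩ := M₁.E_mem x y z h
    exact ⟨Or.inl hxP, Or.inl hyQ, Or.inl hzQ, Or.inr (Or.inl h)⟩
  -- E₂ ⊆ E₃
  · intro x y z h
    obtain ⟨hxP, hyQ, hzQ⟩ := M₂.E_mem x y z h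
    exact ⟨Or.inr hxP, Or.inr hyQ, Or.inr hzQ, Or.inr (Or.inr (Or.inl h))⟩
  -- smallest
  · rintro x - R' hrefl hsymm htrans h1 h2 y z ⟨-, hy, -, h | h⟩
    · subst h; exact hrefl y hy
    · rcases h with h | h | ⟨c, hc1, hc2⟩ | ⟨c, hc1, hc2⟩
      · exact h1 y z h
      · exact h2 y z h
      · exact htrans y c z (h1 y c hc1) (h2 c z hc2)
      · exact htrans y c z (h2 y c hc1) (h1 c z hc2)
  -- FeqLE M₁ M₃
  · constructor
    · refine ⟨subset_union_left, ?_, ?_, ?_⟩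
      · ext x
        constructor
        · exact fun hx => ⟨Or.inl hx, M₁.P_sub hx⟩
        · rintro ⟨hx | hx, hxU⟩
          · exact hx
          · exact hP0sub1 (by rw [hP02]; exact ⟨hx, memU0 x hxU (M₂.P_sub hx)⟩)
      · ext x
        constructor
        · exact fun hx => ⟨Or.inl hx, M₁.Q_sub hx⟩
        · rintro ⟨hx | hx, hxU⟩
          · exact hx
          · exact hQ0sub1 (by rw [hQ02]; exact ⟨hx, memU0 x hxU (M₂.Q_sub hx)⟩)
      · intro x hxP y z
        constructor
        · intro h
          obtain ⟨-, hyQ, hzQ⟩ := M₁.E_mem x y z h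
          exact ⟨⟨Or.inl hxP, Or.inl hyQ, Or.inl hzQ, Or.inr (Or.inl h)⟩, hyQ, hzQ⟩
        · rintro ⟨⟨-, -, -, rfl | h⟩, hyQ, hzQ⟩
          · exact M₁.refl x hxP y hyQ
          · rcases h with h | h | ⟨c, hc1, hc2⟩ | ⟨c, hc1, hc2⟩
            · exact h
            · exact conv21 x y z hxP hyQ hzQ h
            · exact M₁.trans x y c z hc1
                (conv21 x c z hxP (M₁.E_mem x y c hc1).2.2 hzQ hc2)
            · exact M₁.trans x y c z
                (conv21 x y c hxP hyQ (M₁.E_mem x c z hc2).2.1 hc1) hc2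
    · intro δ hδ hcof a haP haδ b hbQ hbδ H₁ c hcQ hE
      obtain ⟨-, -, -, h⟩ := hE
      rcases h with rfl | h
      · exact hbδ
      rcases h with h | h | ⟨d, hd1, hd2⟩ | ⟨d, hd1, hd2⟩
      · exact H₁ c (M₁.E_mem a b c h).2.2 h
      · obtain ⟨haP2, hbQ2, hcQ2⟩ := M₂.E_mem a b c h
        have haP0 := memP0 a haP haP2
        have hbQ0 := memQ0 b hbQ hbQ2
        exact hcl02 δ hδ hcof a haP0 haδ b hbQ0 hbδ
          (fun e heQ hE0 => H₁ e (hQ0sub1 heQ) ((hE01 a haP0 b e).mp hE0).1) c hcQ2 h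
      · obtain ⟨-, -, hdQ1⟩ := M₁.E_mem a b d hd1
        obtain ⟨haP2, hdQ2, hcQ2⟩ := M₂.E_mem a d c hd2
        have haP0 := memP0 a haP haP2
        have hdQ0 := memQ0 d hdQ1 hdQ2
        exact hcl02 δ hδ hcof a haP0 haδ d hdQ0 (H₁ d hdQ1 hd1)
          (fun e heQ hE0 => H₁ e (hQ0sub1 heQ)
            (M₁.trans a b d e hd1 ((hE01 a haP0 d e).mp hE0).1)) c hcQ2 hd2
      · obtain ⟨haP2, hbQ2, hdQ2⟩ := M₂.E_mem a b d hd1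
        obtain ⟨-, hdQ1, hcQ1⟩ := M₁.E_mem a d c hd2
        have haP0 := memP0 a haP haP2
        have hbd1 : M₁.E a b d := conv21 a b d haP hbQ hdQ1 hd1
        exact H₁ c hcQ1 (M₁.trans a b d c hbd1 hd2)
  -- FeqLE M₂ M₃
  · constructor
    · refine ⟨subset_union_right, ?_, ?_, ?_⟩
      · ext x
        constructor
        · exact fun hx => ⟨Or.inr hx, M₂.P_sub hx⟩
        · rintro ⟨hx | hx, hxU⟩
          · exact hP0sub2 (by rw [hP01]; exact ⟨hx, memU0 x (M₁.P_sub hx) hxU⟩)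
          · exact hx
      · ext x
        constructor
        · exact fun hx => ⟨Or.inr hx, M₂.Q_sub hx⟩
        · rintro ⟨hx | hx, hxU⟩
          · exact hQ0sub2 (by rw [hQ01]; exact ⟨hx, memU0 x (M₁.Q_sub hx) hxU⟩)
          · exact hx
      · intro x hxP y z
        constructor
        · intro h
          obtain ⟨-, hyQ, hzQ⟩ := M₂.E_mem x y z h
          exact ⟨⟨Or.inr hxP, Or.inr hyQ, Or.inr hzQ, Or.inr (Or.inr (Or.inl h))⟩, hyQ, hzQ⟩
        · rintro ⟨⟨-, -, -, rfl | h⟩, hyQ, hzQ⟩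
          · exact M₂.refl x hxP y hyQ
          · rcases h with h | h | ⟨c, hc1, hc2⟩ | ⟨c, hc1, hc2⟩
            · exact conv12 x y z hxP hyQ hzQ h
            · exact h
            · exact M₂.trans x y c z
                (conv12 x y c hxP hyQ (M₂.E_mem x c z hc2).2.1 hc1) hc2
            · exact M₂.trans x y c z hc1
                (conv12 x c z hxP (M₂.E_mem x y c hc1).2.2 hzQ hc2)
    · intro δ hδ hcof a haP haδ b hbQ hbδ H₂ c hcQ hE
      obtain ⟨-, -, -, h⟩ := hE
      rcases h with rfl | h
      · exact hbδ
      rcases h with h | h | ⟨d, hd1, hd2⟩ | ⟨d, hd1, hd2⟩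
      · obtain ⟨haP1, hbQ1, hcQ1⟩ := M₁.E_mem a b c h
        have haP0 := memP0 a haP1 haP
        have hbQ0 := memQ0 b hbQ1 hbQ
        exact hcl01 δ hδ hcof a haP0 haδ b hbQ0 hbδ
          (fun e heQ hE0 => H₂ e (hQ0sub2 heQ) ((hE02 a haP0 b e).mp hE0).1) c hcQ1 h
      · exact H₂ c (M₂.E_mem a b c h).2.2 h
      · obtain ⟨haP1, hbQ1, hdQ1⟩ := M₁.E_mem a b d hd1
        obtain ⟨-, hdQ2, hcQ2⟩ := M₂.E_mem a d c hd2
        have haP0 := memP0 a haP1 haP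
        have hbd2 : M₂.E a b d := conv12 a b d haP hbQ hdQ2 hd1
        exact H₂ c hcQ2 (M₂.trans a b d c hbd2 hd2)
      · obtain ⟨haP1, hdQ1, hcQ1⟩ := M₁.E_mem a d c hd2
        obtain ⟨-, hbQ2, hdQ2⟩ := M₂.E_mem a b d hd1
        have haP0 := memP0 a haP1 haP
        have hdQ0 := memQ0 d hdQ1 hdQ2
        exact hcl01 δ hδ hcof a haP0 haδ d hdQ0 (H₂ d hdQ2 hd1)
          (fun e heQ hE0 => H₂ e (hQ0sub2 heQ)
            (M₂.trans a b d e hd1 ((hE02 a haP0 d e).mp hE0).1)) c hcQ1 hd2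
end

section
/- Let λ be a regular uncountable cardinal. Let M₀, M₁, M₂ be triangle-free graphs whose vertex sets are subsets of λ⁺ of cardinality < λ, with V(M₁) ∩ V(M₂) = V(M₀), M₀ ≤ M₁ and M₀ ≤ M₂. Define M₃ to be the graph with vertex set V(M₁) ∪ V(M₂) and edge set E(M₁) ∪ E(M₂). Then M₃ is triangle-free, M₁ ≤ M₃ and M₂ ≤ M₃. -/
open Cardinal Set

/-- A graph whose vertex set is a set of ordinals. -/
structure OrdGraph : Type 1 where
  V : Set Ordinal.{0}
  Adj : Ordinal.{0} → Ordinal.{0} → Prop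
  symm : ∀ a b, Adj a b → Adj b a
  irrefl : ∀ a, ¬ Adj a a
  adj_mem : ∀ a b, Adj a b → a ∈ V ∧ b ∈ V

/-- A graph is triangle-free if no three vertices are pairwise adjacent. -/
def OrdGraph.TriangleFree (G : OrdGraph) : Prop :=
  ∀ a b c, G.Adj a b → G.Adj b c → G.Adj a c → False

/-- The order `G ≤ H` on graphs with vertex sets of ordinals below `λ⁺`:
`G` is an induced subgraph of `H`, and pairs of vertices of `G` with no common neighbour
in `G` below `δ` (for `δ < λ⁺` of cofinality `λ`) have no common neighbour in `H` below `δ`. -/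
def GraphLE (lam : Cardinal.{0}) (G H : OrdGraph) : Prop :=
  (G.V ⊆ H.V ∧ ∀ a ∈ G.V, ∀ b ∈ G.V, (G.Adj a b ↔ H.Adj a b)) ∧
  ∀ δ : Ordinal.{0}, δ < (Order.succ lam).ord → δ.cof = lam →
    ∀ a ∈ G.V, ∀ b ∈ G.V,
      (∀ c ∈ G.V, c < δ → ¬ (G.Adj c a ∧ G.Adj c b)) →
      ∀ c ∈ H.V, c < δ → ¬ (H.Adj c a ∧ H.Adj c b)

/-- amalgamation for triangle-free graphs, from the proof of Lemma 5.3. -/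
theorem statement13 (lam : Cardinal.{0}) (hreg : lam.IsRegular)
    (hunc : Cardinal.aleph0 < lam)
    (M₀ M₁ M₂ : OrdGraph)
    (htf₀ : M₀.TriangleFree) (htf₁ : M₁.TriangleFree) (htf₂ : M₂.TriangleFree)
    (hsub₀ : M₀.V ⊆ Set.Iio (Order.succ lam).ord) (hcard₀ : #M₀.V < Cardinal.lift.{1} lam)
    (hsub₁ : M₁.V ⊆ Set.Iio (Order.succ lam).ord) (hcard₁ : #M₁.V < Cardinal.lift.{1} lam)
    (hsub₂ : M₂.V ⊆ Set.Iio (Order.succ lam).ord) (hcard₂ : #M₂.V < Cardinal.lift.{1} lam)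
    (hinter : M₁.V ∩ M₂.V = M₀.V)
    (h01 : GraphLE lam M₀ M₁) (h02 : GraphLE lam M₀ M₂) :
    ∃ M₃ : OrdGraph,
      M₃.V = M₁.V ∪ M₂.V ∧
      (∀ a b, M₃.Adj a b ↔ M₁.Adj a b ∨ M₂.Adj a b) ∧
      M₃.TriangleFree ∧ GraphLE lam M₁ M₃ ∧ GraphLE lam M₂ M₃ := by
  have hV : ∀ x, x ∈ M₁.V → x ∈ M₂.V → x ∈ M₀.V := by
    intro x h1 h2; rw [← hinter]; exact ⟨h1, h2⟩
  have hkey : ∀ x y, x ∈ M₀.V → y ∈ M₀.V → (M₁.Adj x y ↔ M₂.Adj x y) := by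
    intro x y hx hy
    rw [← h01.1.2 x hx y hy, h02.1.2 x hx y hy]
  have mix12 : ∀ x y, M₁.Adj x y → x ∈ M₂.V → y ∈ M₂.V → M₂.Adj x y := by
    intro x y h hx hy
    have hm := M₁.adj_mem x y h
    exact (hkey x y (hV x hm.1 hx) (hV y hm.2 hy)).1 h
  have mix21 : ∀ x y, M₂.Adj x y → x ∈ M₁.V → y ∈ M₁.V → M₁.Adj x y := by
    intro x y h hx hy
    have hm := M₂.adj_mem x y h
    exact (hkey x y (hV x hx hm.1) (hV y hy hm.2)).2 h
  refine ⟨⟨M₁.V ∪ M₂.V, fun a b => M₁.Adj a b ∨ M₂.Adj a b, ?_, ?_, ?_⟩,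
    rfl, fun a b => Iff.rfl, ?_, ?_, ?_⟩
  · rintro a b (h | h)
    · exact Or.inl (M₁.symm a b h)
    · exact Or.inr (M₂.symm a b h)
  · rintro a (h | h)
    · exact M₁.irrefl a h
    · exact M₂.irrefl a h
  · rintro a b (h | h)
    · exact ⟨Or.inl (M₁.adj_mem a b h).1, Or.inl (M₁.adj_mem a b h).2⟩
    · exact ⟨Or.inr (M₂.adj_mem a b h).1, Or.inr (M₂.adj_mem a b h).2⟩
  · -- triangle free
    rintro a b c (h1 | h1) (h2 | h2) (h3 | h3)
    · exact htf₁ a b c h1 h2 h3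
    · exact htf₁ a b c h1 h2
        (mix21 a c h3 (M₁.adj_mem a b h1).1 (M₁.adj_mem b c h2).2)
    · exact htf₁ a b c h1
        (mix21 b c h2 (M₁.adj_mem a b h1).2 (M₁.adj_mem a c h3).2) h3
    · exact htf₂ a b c
        (mix12 a b h1 (M₂.adj_mem a c h3).1 (M₂.adj_mem b c h2).1) h2 h3
    · exact htf₁ a b c
        (mix21 a b h1 (M₁.adj_mem a c h3).1 (M₁.adj_mem b c h2).1) h2 h3
    · exact htf₂ a b c h1
        (mix12 b c h2 (M₂.adj_mem a b h1).2 (M₂.adj_mem a c h3).2) h3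
    · exact htf₂ a b c h1 h2
        (mix12 a c h3 (M₂.adj_mem a b h1).1 (M₂.adj_mem b c h2).2)
    · exact htf₂ a b c h1 h2 h3
  · -- GraphLE lam M₁ M₃
    refine ⟨⟨Set.subset_union_left, fun a ha b hb => ⟨Or.inl, ?_⟩⟩, ?_⟩
    · rintro (h | h)
      · exact h
      · exact mix21 a b h ha hb
    · rintro δ hδ hcof a ha b hb hno c hc hclt ⟨hca, hcb⟩
      rcases hca with hca | hca <;> rcases hcb with hcb | hcb
      · exact hno c (M₁.adj_mem c a hca).1 hclt ⟨hca, hcb⟩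
      · exact hno c (M₁.adj_mem c a hca).1 hclt
          ⟨hca, mix21 c b hcb (M₁.adj_mem c a hca).1 hb⟩
      · exact hno c (M₁.adj_mem c b hcb).1 hclt
          ⟨mix21 c a hca (M₁.adj_mem c b hcb).1 ha, hcb⟩
      · have ha0 : a ∈ M₀.V := hV a ha (M₂.adj_mem c a hca).2
        have hb0 : b ∈ M₀.V := hV b hb (M₂.adj_mem c b hcb).2
        refine h02.2 δ hδ hcof a ha0 b hb0 ?_ c (M₂.adj_mem c a hca).1 hclt ⟨hca, hcb⟩
        intro c' hc' hc'lt ⟨h1, h2⟩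
        exact hno c' (h01.1.1 hc') hc'lt
          ⟨(h01.1.2 c' hc' a ha0).1 h1, (h01.1.2 c' hc' b hb0).1 h2⟩
  · -- GraphLE lam M₂ M₃
    refine ⟨⟨Set.subset_union_right, fun a ha b hb => ⟨Or.inr, ?_⟩⟩, ?_⟩
    · rintro (h | h)
      · exact mix12 a b h ha hb
      · exact h
    · rintro δ hδ hcof a ha b hb hno c hc hclt ⟨hca, hcb⟩
      rcases hca with hca | hca <;> rcases hcb with hcb | hcb
      · have ha0 : a ∈ M₀.V := hV a (M₁.adj_mem c a hca).2 ha
        have hb0 : b ∈ M₀.V := hV b (M₁.adj_mem c b hcb).2 hb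
        refine h01.2 δ hδ hcof a ha0 b hb0 ?_ c (M₁.adj_mem c a hca).1 hclt ⟨hca, hcb⟩
        intro c' hc' hc'lt ⟨h1, h2⟩
        exact hno c' (h02.1.1 hc') hc'lt
          ⟨(h02.1.2 c' hc' a ha0).1 h1, (h02.1.2 c' hc' b hb0).1 h2⟩
      · exact hno c (M₂.adj_mem c b hcb).1 hclt
          ⟨mix12 c a hca (M₂.adj_mem c b hcb).1 ha, hcb⟩
      · exact hno c (M₂.adj_mem c a hca).1 hclt
          ⟨hca, mix12 c b hcb (M₂.adj_mem c a hca).1 hb⟩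
      · exact hno c (M₂.adj_mem c a hca).1 hclt ⟨hca, hcb⟩
end
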